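/- arXiv:1906.03149 — 5 statements merged into one kernel-verified Lean document; each statement's English description precedes it below -/
import Mathlib

section
/- For every odd prime p there exists a Steiner triple system S on a 3p-element vertex set V such that for every subset V' ⊆ V with 2·|V'| ≤ |V|, one has |N(V')| ≥ |V'| − 3. -/
open Finset

variable {α : Type*}

/-- A pair of (distinct) vertices is covered if it lies in some triple of `F`. -/
def Covered [DecidableEq α] (F : Finset (Finset α)) (x y : α) : Prop :=
  ∃ T ∈ F, x ∈ T ∧ y ∈ T

instance [DecidableEq α] (F : Finset (Finset α)) (x y : α) : Decidable (Covered F x y) :=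
  inferInstanceAs (Decidable (∃ T ∈ F, x ∈ T ∧ y ∈ T))

/-- Linear triple system on `V`. -/
def IsLinearTS [DecidableEq α] (V : Finset α) (F : Finset (Finset α)) : Prop :=
  (∀ T ∈ F, T ⊆ V ∧ T.card = 3) ∧
    ∀ x ∈ V, ∀ y ∈ V, x ≠ y → (F.filter fun T => x ∈ T ∧ y ∈ T).card ≤ 1

/-- Steiner triple system on `V`. -/
def IsSTS [DecidableEq α] (V : Finset α) (F : Finset (Finset α)) : Prop :=
  (∀ T ∈ F, T ⊆ V ∧ T.card = 3) ∧
    ∀ x ∈ V, ∀ y ∈ V, x ≠ y → (F.filter fun T => x ∈ T ∧ y ∈ T).card = 1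

/-- Neighbourhood of `V'` with respect to the triple system `F` on `V`. -/
def nbhd [DecidableEq α] (V : Finset α) (F : Finset (Finset α)) (V' : Finset α) : Finset α :=
  (V \ V').filter fun z => ∃ x ∈ V', ∃ y ∈ V', x ≠ y ∧ ({x, y, z} : Finset α) ∈ F

/-- `F` is spreading: the closure of every nontrivial subset is `V`. -/
def IsSpreading [DecidableEq α] (V : Finset α) (F : Finset (Finset α)) : Prop :=
  ∀ V' ⊆ V, 3 ≤ V'.card → V' ∉ F →
    ∀ W, V' ⊆ W → W ⊆ V → nbhd V F W = ∅ → W = V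

/-- `F` is weakly spreading. -/
def IsWeaklySpreading [DecidableEq α] (V : Finset α) (F : Finset (Finset α)) : Prop :=
  ∀ F' ⊆ F, 2 ≤ F'.card →
    ∀ W, F'.biUnion id ⊆ W → W ⊆ V → nbhd V F W = ∅ → W = V

/-- `Val(T)`: number of private neighbours of the triple `T`. -/
def valT [DecidableEq α] (V : Finset α) (F : Finset (Finset α)) (T : Finset α) : ℕ :=
  ((V \ T).filter fun v => (T.filter fun t => Covered F v t).card = 1).card

/-- Two triples are adjacent if pairs of each span a `C₄` in the complement of the skeleton. -/
def AdjT [DecidableEq α] (F : Finset (Finset α)) (T T' : Finset α) : Prop :=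
  ∃ v₁ ∈ T, ∃ v₂ ∈ T, ∃ u₁ ∈ T', ∃ u₂ ∈ T',
    v₁ ≠ v₂ ∧ u₁ ≠ u₂ ∧ v₁ ≠ u₁ ∧ v₁ ≠ u₂ ∧ v₂ ≠ u₁ ∧ v₂ ≠ u₂ ∧
    ¬Covered F v₁ u₁ ∧ ¬Covered F u₁ v₂ ∧ ¬Covered F v₂ u₂ ∧ ¬Covered F u₂ v₁

instance [DecidableEq α] (F : Finset (Finset α)) (T T' : Finset α) : Decidable (AdjT F T T') :=
  inferInstanceAs (Decidable (∃ v₁ ∈ T, ∃ v₂ ∈ T, ∃ u₁ ∈ T', ∃ u₂ ∈ T',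
    v₁ ≠ v₂ ∧ u₁ ≠ u₂ ∧ v₁ ≠ u₁ ∧ v₁ ≠ u₂ ∧ v₂ ≠ u₁ ∧ v₂ ≠ u₂ ∧
    ¬Covered F v₁ u₁ ∧ ¬Covered F u₁ v₂ ∧ ¬Covered F v₂ u₂ ∧ ¬Covered F u₂ v₁))

/-!
Bose's Steiner triple system on `ZMod p × ZMod 3` consists of the vertical triples
`{x} × ZMod 3` and the triples `{(x, i), (y, i), ((x + y) / 2, i + 1)}` with `x ≠ y`.
Write `A`, `B`, `C` for the parts of `V'` on the levels `i`, `i + 1`, `i + 2`. A point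
`(z, i) ∉ V'` is a neighbour of `V'` as soon as `z ∈ 2B - A`, or `z` is the midpoint of two
distinct points of `C`, or `z ∈ B ∩ C`. By Cauchy–Davenport, `2B - A` alone yields about
`|B| - 1` neighbours on level `i`, which sums to `|V'| - 3` over the three levels. When a level
is empty or `2B - A` is all of `ZMod p`, the midpoints of `C` (again by Cauchy–Davenport, or by
pigeonhole once `C` is large) make up the difference, using `2|V'| ≤ 3p`.
-/

open scoped Pointwise

section Transport

variable {β : Type*} [DecidableEq α] [DecidableEq β]

theorem IsSTS.map {V : Finset α} {F : Finset (Finset α)} (h : IsSTS V F) (e : α ↪ β) :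
    IsSTS (V.map e) (F.map (mapEmbedding e).toEmbedding) := by
  refine ⟨fun T' hT' => ?_, fun x hx y hy hxy => ?_⟩
  · obtain ⟨T, hT, rfl⟩ := mem_map.1 hT'
    obtain ⟨hTV, hT3⟩ := h.1 T hT
    exact ⟨map_subset_map.2 hTV, by simpa using hT3⟩
  · obtain ⟨a, ha, rfl⟩ := mem_map.1 hx
    obtain ⟨b, hb, rfl⟩ := mem_map.1 hy
    rw [filter_map, card_map]
    simpa using h.2 a ha b hb (ne_of_apply_ne e hxy)

theorem nbhd_map (e : α ↪ β) (V : Finset α) (F : Finset (Finset α)) (W : Finset α) :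
    nbhd (V.map e) (F.map (mapEmbedding e).toEmbedding) (W.map e) = (nbhd V F W).map e := by
  rw [nbhd, nbhd, ← Finset.map_sdiff, filter_map]
  congr 1
  refine filter_congr fun z _ => ?_
  simp only [Function.comp_apply, mem_map, ne_eq, exists_exists_and_eq_and, e.injective.eq_iff]
  refine exists_congr fun x => and_congr_right fun _ => exists_congr fun y =>
    and_congr_right fun _ => and_congr_right fun _ => ?_
  rw [← map_singleton, ← map_insert, ← map_insert]
  exact ⟨fun ⟨T, hT, hTe⟩ => map_injective e hTe ▸ hT, fun h => ⟨_, h, rfl⟩⟩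

end Transport

theorem Finset.sub_eq_univ_of_card_lt {G : Type*} [AddGroup G] [Fintype G] [DecidableEq G]
    {s t : Finset G} (h : Fintype.card G < #s + #t) : s - t = univ := by
  refine eq_univ_of_forall fun z => ?_
  have h' : #(univ : Finset G) < #s + #(t.image (z + ·)) := by
    rwa [card_image_of_injective _ (add_right_injective z), card_univ]
  obtain ⟨x, hx⟩ := inter_nonempty_of_card_lt_card_add_card (subset_univ _) (subset_univ _) h'
  obtain ⟨hxs, y, hy, rfl⟩ := mem_inter.1 hx |>.imp_right mem_image.1
  exact mem_sub.2 ⟨_, hxs, y, hy, add_sub_cancel_right z y⟩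

namespace Bose

section Field

variable {K : Type*} [Field K] [NeZero (2 : K)] {x y a b : K}

theorem add_div_two_ne_left (h : x ≠ y) : (x + y) / 2 ≠ x := by
  rw [ne_eq, div_eq_iff two_ne_zero]; contrapose! h; linear_combination -h

theorem add_two_mul_sub_div_two (a b : K) : (a + (2 * b - a)) / 2 = b := by
  rw [add_sub_cancel, mul_div_cancel_left₀ b two_ne_zero]

theorem two_mul_add_div_two_sub (x y : K) : 2 * ((x + y) / 2) - x = y := by
  rw [mul_div_cancel₀ _ two_ne_zero, add_sub_cancel_left]

theorem ne_two_mul_sub (h : a ≠ b) : a ≠ 2 * b - a := by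
  contrapose! h
  exact (mul_left_cancel₀ (two_ne_zero (α := K)) (by linear_combination -h)).symm

end Field

variable {K : Type*}

def verticalTriple (x : K) : Finset (K × ZMod 3) := {x} ×ˢ univ

@[simp]
theorem mem_verticalTriple {u : K × ZMod 3} {x : K} : u ∈ verticalTriple x ↔ u.1 = x := by
  simp [verticalTriple, Prod.ext_iff, eq_comm]

theorem card_verticalTriple (x : K) : #(verticalTriple x) = 3 := by
  simp [verticalTriple]

section Level

variable [Fintype K] [DecidableEq K]

def level (W : Finset (K × ZMod 3)) (i : ZMod 3) : Finset K := univ.filter fun x => (x, i) ∈ W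

@[simp]
theorem mem_level {W : Finset (K × ZMod 3)} {i : ZMod 3} {x : K} : x ∈ level W i ↔ (x, i) ∈ W := by
  simp [level]

theorem card_eq_sum_card_level (W : Finset (K × ZMod 3)) : #W = ∑ i, #(level W i) := by
  rw [card_eq_sum_card_fiberwise fun u _ => mem_univ u.2]
  refine sum_congr rfl fun i _ => ?_
  refine (congrArg card ?_).trans (card_map ⟨(·, i), Prod.mk_left_injective i⟩)
  ext ⟨x, j⟩
  simp only [mem_filter, mem_map, mem_level, Function.Embedding.coeFn_mk, Prod.mk.injEq]
  grind

end Level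

variable [Field K] [DecidableEq K]

def midpointTriple (x y : K) (i : ZMod 3) : Finset (K × ZMod 3) :=
  {(x, i), (y, i), ((x + y) / 2, i + 1)}

variable (K) in
def boseSystem [Fintype K] : Finset (Finset (K × ZMod 3)) :=
  univ.image verticalTriple ∪ (univ.offDiag ×ˢ univ).image fun q => midpointTriple q.1.1 q.1.2 q.2

theorem mem_boseSystem [Fintype K] {T : Finset (K × ZMod 3)} :
    T ∈ boseSystem K ↔ (∃ x, verticalTriple x = T) ∨ ∃ x y i, x ≠ y ∧ midpointTriple x y i = T := by
  simp [boseSystem]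

theorem mem_midpointTriple {a x y : K} {i j : ZMod 3} :
    (a, j) ∈ midpointTriple x y i ↔ (a = x ∨ a = y) ∧ j = i ∨ a = (x + y) / 2 ∧ j = i + 1 := by
  simp only [midpointTriple, mem_insert, mem_singleton, Prod.mk.injEq]
  tauto

theorem midpointTriple_comm (x y : K) (i : ZMod 3) :
    midpointTriple x y i = midpointTriple y x i := by
  rw [midpointTriple, midpointTriple, insert_comm, add_comm]

theorem card_midpointTriple {x y : K} (h : x ≠ y) (i : ZMod 3) : #(midpointTriple x y i) = 3 := by
  rw [midpointTriple, card_insert_of_notMem, card_pair] <;> simp [h]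

theorem midpointTriple_eq_of_mem_of_mem {x y a b : K} {i l : ZMod 3} (hab : a ≠ b)
    (ha : (a, i) ∈ midpointTriple x y l) (hb : (b, i) ∈ midpointTriple x y l) :
    midpointTriple x y l = midpointTriple a b i := by
  rw [mem_midpointTriple] at ha hb
  rcases ha with ⟨rfl | rfl, rfl⟩ | ⟨rfl, rfl⟩ <;> rcases hb with ⟨rfl | rfl, h⟩ | ⟨rfl, h⟩ <;>
    simp_all [midpointTriple_comm]

theorem existsUnique_mem_boseSystem_of_same_level [Fintype K] {a b : K} (hab : a ≠ b) (i : ZMod 3) :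
    ∃! T, T ∈ boseSystem K ∧ (a, i) ∈ T ∧ (b, i) ∈ T := by
  refine ⟨midpointTriple a b i, ⟨mem_boseSystem.2 (Or.inr ⟨a, b, i, hab, rfl⟩),
    by simp [midpointTriple], by simp [midpointTriple]⟩, ?_⟩
  rintro T ⟨hT, ha, hb⟩
  rcases mem_boseSystem.1 hT with ⟨x, rfl⟩ | ⟨x, y, l, -, rfl⟩
  · simp only [mem_verticalTriple] at ha hb
    exact absurd (ha.trans hb.symm) hab
  · exact midpointTriple_eq_of_mem_of_mem hab ha hb

def midpoints (C : Finset K) : Finset K := C.offDiag.image fun q => (q.1 + q.2) / 2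

section TwoNeZero

variable [NeZero (2 : K)] {x y a b : K} {i l : ZMod 3}

theorem midpointTriple_eq_of_mem_of_mem_succ (hxy : x ≠ y) (ha : (a, i) ∈ midpointTriple x y l)
    (hb : (b, i + 1) ∈ midpointTriple x y l) :
    a ≠ b ∧ midpointTriple x y l = midpointTriple a (2 * b - a) i := by
  have hl : l + 1 + 1 ≠ l := by rw [add_assoc]; simp; decide
  rw [mem_midpointTriple] at ha hb
  obtain ⟨hax, rfl⟩ : (a = x ∨ a = y) ∧ i = l := by
    rcases ha with h | ⟨-, rfl⟩
    · exact h
    · simp [hl] at hb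
  obtain rfl : b = (x + y) / 2 := by simpa using hb
  rcases hax with rfl | rfl
  · exact ⟨(add_div_two_ne_left hxy).symm, by rw [two_mul_add_div_two_sub]⟩
  · rw [add_comm, two_mul_add_div_two_sub, midpointTriple_comm x]
    exact ⟨(add_div_two_ne_left hxy.symm).symm, rfl⟩

theorem card_add_self_le (C D : Finset K) : #(C + C) ≤ #(midpoints C ∪ D ∩ C) + #(C \ D) := by
  calc #(C + C) = #((C + C).image (· / 2)) :=
        (card_image_of_injective _ fun _ _ => (div_left_inj' two_ne_zero).1).symm
    _ ≤ #(midpoints C ∪ D ∩ C ∪ C \ D) := card_le_card ?_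
    _ ≤ _ := card_union_le _ _
  intro w hw
  obtain ⟨_, ⟨x, hx, y, hy, rfl⟩, rfl⟩ := mem_image.1 hw |>.imp fun _ h => h.imp_left mem_add.1
  by_cases hxy : x = y
  · subst hxy
    rw [← two_mul, mul_div_cancel_left₀ x two_ne_zero]
    by_cases hxD : x ∈ D <;> simp [hx, hxD]
  · exact mem_union_left _ (mem_union_left _
      (mem_image.2 ⟨(x, y), mem_offDiag.2 ⟨hx, hy, hxy⟩, rfl⟩))

variable [Fintype K]

theorem existsUnique_mem_boseSystem_of_succ_level (a b : K) (i : ZMod 3) :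
    ∃! T, T ∈ boseSystem K ∧ (a, i) ∈ T ∧ (b, i + 1) ∈ T := by
  by_cases hab : a = b
  · subst hab
    refine ⟨verticalTriple a, ⟨mem_boseSystem.2 (Or.inl ⟨a, rfl⟩), by simp, by simp⟩, ?_⟩
    rintro T ⟨hT, ha, hb⟩
    rcases mem_boseSystem.1 hT with ⟨x, rfl⟩ | ⟨x, y, l, hxy, rfl⟩
    · simp only [mem_verticalTriple] at ha
      rw [ha]
    · exact absurd rfl (midpointTriple_eq_of_mem_of_mem_succ hxy ha hb).1
  · refine ⟨midpointTriple a (2 * b - a) i,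
      ⟨mem_boseSystem.2 (Or.inr ⟨_, _, i, ne_two_mul_sub hab, rfl⟩), by simp [midpointTriple],
        by rw [mem_midpointTriple, add_two_mul_sub_div_two]; simp⟩, ?_⟩
    rintro T ⟨hT, ha, hb⟩
    rcases mem_boseSystem.1 hT with ⟨x, rfl⟩ | ⟨x, y, l, hxy, rfl⟩
    · simp only [mem_verticalTriple] at ha hb
      exact absurd (ha.trans hb.symm) hab
    · exact (midpointTriple_eq_of_mem_of_mem_succ hxy ha hb).2

theorem isSTS_boseSystem : IsSTS univ (boseSystem K) := by
  refine ⟨fun T hT => ⟨subset_univ T, ?_⟩, fun u _ v _ huv => ?_⟩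
  · rcases mem_boseSystem.1 hT with ⟨x, rfl⟩ | ⟨x, y, i, hxy, rfl⟩
    exacts [card_verticalTriple x, card_midpointTriple hxy i]
  · rw [card_eq_one_iff_existsUnique]
    simp only [mem_filter]
    obtain ⟨a, i⟩ := u
    obtain ⟨b, j⟩ := v
    have levels : ∀ i j : ZMod 3, j = i ∨ j = i + 1 ∨ i = j + 1 := by decide
    rcases levels i j with rfl | rfl | rfl
    · exact existsUnique_mem_boseSystem_of_same_level (fun h => huv (by rw [h])) _
    · exact existsUnique_mem_boseSystem_of_succ_level a b i
    · exact (existsUnique_congr fun T => and_congr_right' and_comm).1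
        (existsUnique_mem_boseSystem_of_succ_level b a j)

theorem sdiff_level_subset_level_nbhd (W : Finset (K × ZMod 3)) (i : ZMod 3) :
    ((level W (i + 1)).image (2 * ·) - level W i ∪
        (midpoints (level W (i + 2)) ∪ level W (i + 1) ∩ level W (i + 2))) \ level W i ⊆
      level (nbhd univ (boseSystem K) W) i := by
  intro z hz
  simp only [mem_sdiff, mem_union, mem_inter, mem_level, mem_sub, mem_image, midpoints,
    mem_offDiag] at hz
  obtain ⟨hz, hzW⟩ := hz
  rw [mem_level, nbhd, mem_filter, mem_sdiff]
  refine ⟨⟨mem_univ _, hzW⟩, ?_⟩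
  rcases hz with ⟨_, ⟨m, hm, rfl⟩, x, hx, rfl⟩ | ⟨⟨x, y⟩, ⟨hx, hy, hxy⟩, rfl⟩ | ⟨hz₁, hz₂⟩
  · have hxz : x ≠ 2 * m - x := fun h => hzW (h ▸ hx)
    refine ⟨(x, i), hx, (m, i + 1), hm, by simp, ?_⟩
    convert mem_boseSystem.2 (Or.inr ⟨x, 2 * m - x, i, hxz, rfl⟩) using 1
    rw [midpointTriple, add_two_mul_sub_div_two, pair_comm]
  · refine ⟨(x, i + 2), hx, (y, i + 2), hy, by simpa using hxy, ?_⟩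
    have hi : i + 2 + 1 = i := by rw [add_assoc]; simp; decide
    convert mem_boseSystem.2 (Or.inr ⟨x, y, i + 2, hxy, rfl⟩) using 1
    rw [midpointTriple, hi]
  · refine ⟨(z, i + 1), hz₁, (z, i + 2), hz₂, by simp; decide, ?_⟩
    have levels : ∀ i j : ZMod 3, j = i + 1 ∨ j = i + 2 ∨ j = i := by decide
    convert mem_boseSystem.2 (Or.inl ⟨z, rfl⟩)
    ext ⟨a, j⟩
    simp [← and_or_left, levels i j]

theorem midpoints_eq_univ {C : Finset K} (h : Fintype.card K + 2 ≤ 2 * #C) :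
    midpoints C = univ := by
  refine eq_univ_of_forall fun z => ?_
  have hreflect : #(C.image (2 * z - ·)) = #C := card_image_of_injective _ sub_right_injective
  have hinter : 1 < #(C ∩ C.image (2 * z - ·)) := by
    have := card_inter_add_card_union C (C.image (2 * z - ·))
    have := card_le_univ (C ∪ C.image (2 * z - ·))
    omega
  obtain ⟨x, hx, hxz⟩ := exists_mem_ne hinter z
  obtain ⟨hxC, y, hyC, rfl⟩ := mem_inter.1 hx |>.imp_right mem_image.1
  refine mem_image.2 ⟨(2 * z - y, y), mem_offDiag.2 ⟨hxC, hyC, fun h => hxz ?_⟩, ?_⟩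
  · obtain rfl : z = y := mul_left_cancel₀ two_ne_zero (by linear_combination h)
    exact h
  · rw [sub_add_cancel, mul_div_cancel_left₀ z two_ne_zero]

end TwoNeZero

/-- The bounds that Cauchy–Davenport and pigeonhole give for the number `n` of neighbours on a
level in terms of `a = |A|`, `b = |B|`, `c = |C|`. -/
structure LevelBounds (p a b c n : ℕ) : Prop where
  sum : 0 < a → 0 < b → a + b ≤ p + 1 → b ≤ n + 1
  midpoint : 0 < c → 2 * c ≤ p + 1 → c ≤ n + a + 1
  midpoint_vertical : 0 < c → 2 * c ≤ p + 1 → 2 * c + b ≤ n + a + p + 1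
  sum_full : p < a + b → p ≤ n + a
  midpoint_full : p + 2 ≤ 2 * c → p ≤ n + a

set_option maxHeartbeats 1000000 in
theorem LevelBounds.sum_le_add_three {p a₀ a₁ a₂ n₀ n₁ n₂ : ℕ} (h₀ : LevelBounds p a₀ a₁ a₂ n₀)
    (h₁ : LevelBounds p a₁ a₂ a₀ n₁) (h₂ : LevelBounds p a₂ a₀ a₁ n₂)
    (h : 2 * (a₀ + a₁ + a₂) ≤ 3 * p) : a₀ + a₁ + a₂ ≤ n₀ + n₁ + n₂ + 3 := by
  obtain ⟨s₀, m₀, v₀, fs₀, fm₀⟩ := h₀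
  obtain ⟨s₁, m₁, v₁, fs₁, fm₁⟩ := h₁
  obtain ⟨s₂, m₂, v₂, fs₂, fm₂⟩ := h₂
  omega

variable {p : ℕ} [Fact p.Prime] [NeZero (2 : ZMod p)]

theorem levelBounds_of_subset {A B C N : Finset (ZMod p)}
    (h : (B.image (2 * ·) - A ∪ (midpoints C ∪ B ∩ C)) \ A ⊆ N) : LevelBounds p #A #B #C #N := by
  have hp : p.Prime := Fact.out
  have hcover : #(B.image (2 * ·) - A ∪ (midpoints C ∪ B ∩ C)) ≤ #N + #A :=
    card_le_card_sdiff_add_card.trans (Nat.add_le_add_right (card_le_card h) _)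
  have hT : #(B.image (2 * ·) - A) ≤ #N + #A := (card_le_card subset_union_left).trans hcover
  have hM : #(midpoints C ∪ B ∩ C) ≤ #N + #A := (card_le_card subset_union_right).trans hcover
  have hB2 : #(B.image (2 * ·)) = #B := card_image_of_injective _ (mul_right_injective₀ two_ne_zero)
  have hCB : #(C \ B) ≤ p - #B := by
    have := card_le_card (sdiff_subset_sdiff (subset_univ C) le_rfl : C \ B ⊆ univ \ B)
    rwa [card_univ_sdiff, ZMod.card] at this
  have hTcd (hA : 0 < #A) (hB : 0 < #B) : min p (#A + #B - 1) ≤ #(B.image (2 * ·) - A) := by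
    have := ZMod.cauchy_davenport hp ((card_pos.1 hB).image (2 * ·)) (card_pos.1 hA).neg
    rwa [hB2, card_neg, add_comm, ← sub_eq_add_neg] at this
  have hMcd (hC : 0 < #C) : min p (2 * #C - 1) ≤ #(midpoints C ∪ B ∩ C) + #(C \ B) := by
    have := ZMod.cauchy_davenport hp (card_pos.1 hC) (card_pos.1 hC)
    have := card_add_self_le C B
    omega
  refine ⟨fun hA hB _ => ?_, fun hC _ => ?_, fun hC _ => ?_, fun h => ?_, fun h => ?_⟩
  · have := hTcd hA hB
    omega
  · have := hMcd hC
    have := card_le_card (sdiff_subset : C \ B ⊆ C)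
    omega
  · have := hMcd hC
    have := card_le_univ B
    rw [ZMod.card] at this
    omega
  · rw [sub_eq_univ_of_card_lt (by rwa [hB2, ZMod.card, add_comm]), card_univ, ZMod.card] at hT
    omega
  · have hfull : #(midpoints C) = p := by
      rw [midpoints_eq_univ (by rwa [ZMod.card]), card_univ, ZMod.card]
    have := card_le_card (subset_union_left : midpoints C ⊆ midpoints C ∪ B ∩ C)
    omega

theorem levelBounds (W : Finset (ZMod p × ZMod 3)) {i j k : ZMod 3} (hj : j = i + 1)
    (hk : k = i + 2) :
    LevelBounds p #(level W i) #(level W j) #(level W k)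
      #(level (nbhd univ (boseSystem (ZMod p)) W) i) := by
  subst hj hk
  exact levelBounds_of_subset (sdiff_level_subset_level_nbhd W i)

theorem sum_zmod_three {M : Type*} [AddCommMonoid M] (f : ZMod 3 → M) :
    ∑ i, f i = f 0 + f 1 + f 2 :=
  Fin.sum_univ_three f

theorem card_le_card_nbhd_add_three (W : Finset (ZMod p × ZMod 3)) (hW : 2 * #W ≤ 3 * p) :
    #W ≤ #(nbhd univ (boseSystem (ZMod p)) W) + 3 := by
  rw [card_eq_sum_card_level, sum_zmod_three] at hW ⊢
  rw [card_eq_sum_card_level (nbhd _ _ _), sum_zmod_three]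
  exact LevelBounds.sum_le_add_three (levelBounds W (by decide) (by decide))
    (levelBounds W (by decide) (by decide)) (levelBounds W (by decide) (by decide)) hW

end Bose

/-- For every odd prime `p` there exists a Steiner triple system `S` on a
`3p`-element vertex set `V` such that for every `V' ⊆ V` with `2|V'| ≤ |V|`,
`|N(V')| ≥ |V'| - 3`. -/
theorem statement_0 (p : ℕ) (hp : p.Prime) (hodd : Odd p) :
    ∃ (V : Finset ℕ) (S : Finset (Finset ℕ)),
      V.card = 3 * p ∧ IsSTS V S ∧
      ∀ V' ⊆ V, 2 * V'.card ≤ V.card →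
        (V'.card : ℤ) - 3 ≤ ((nbhd V S V').card : ℤ) := by
  have := Fact.mk hp
  have : NeZero (2 : ZMod p) :=
    ⟨Ring.two_ne_zero (by rw [ZMod.ringChar_zmod_n]; rintro rfl; exact absurd hodd (by decide))⟩
  let e : ZMod p × ZMod 3 ↪ ℕ := (Fintype.equivFin _).toEmbedding.trans Fin.valEmbedding
  have hcard : #(univ.map e) = 3 * p := by simp [mul_comm]
  refine ⟨univ.map e, (Bose.boseSystem (ZMod p)).map (mapEmbedding e).toEmbedding, hcard,
    Bose.isSTS_boseSystem.map e, fun V' hV' hsize => ?_⟩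
  obtain ⟨W, -, rfl⟩ := subset_map_iff.1 hV'
  rw [hcard, card_map] at hsize
  rw [nbhd_map, card_map, card_map]
  have := Bose.card_le_card_nbhd_add_three W hsize
  omega
end

section
/- There exists n₀ such that for every n ≥ n₀, every spreading linear triple system F on an n-element set V satisfies |F| > 0.1103·n². -/
open Finset

variable {α : Type*}

/-!
Call a pair of distinct vertices *uncovered* if no triple contains it, and let `N(u)` be the set of
vertices forming an uncovered pair with `u`. When `F` is spreading and `|V| ≥ 5`, no set of three or
four vertices other than a triple is closed. Hence the uncovered pairs form a triangle-free graph,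
and no vertex forms an uncovered pair with every point of a triple. So every pair inside `N(u)` lies
in a triple meeting `N(u)` in exactly two points, which gives `C(|N(u)|, 2)` distinct triples; for
an uncovered pair `uv` the sets `N(u)` and `N(v)` are disjoint, and so are these two families of
triples. Counting ordered pairs gives `n² ≤ n + 6|F| + S` with `S = ∑ |N(u)|`. If `S ≤ 0.335 n²`
this already gives the bound. Otherwise Cauchy–Schwarz gives an uncovered pair `uv` with
`|N(u)| + |N(v)| ≥ 2S/n > 0.67 n`, and then
`|F| ≥ C(|N(u)|, 2) + C(|N(v)|, 2) ≥ (0.67 n)²/4 - O(n)`.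
-/

section SymmetricRelation

variable {β : Type*} (V : Finset β) {r : β → β → Prop} [DecidableRel r]

lemma card_filter_product_eq_sum_card_filter :
    #((V ×ˢ V).filter fun p => r p.1 p.2) = ∑ u ∈ V, #(V.filter (r u)) := by
  simp only [card_filter, sum_product]

lemma sum_filter_product_card_filter_fst :
    ∑ p ∈ (V ×ˢ V).filter (fun p => r p.1 p.2), #(V.filter (r p.1)) =
      ∑ u ∈ V, #(V.filter (r u)) ^ 2 := by
  rw [sum_filter, sum_product]
  refine sum_congr rfl fun u _ => ?_
  simp [← sum_filter, sq]

lemma sum_filter_product_card_filter_snd [Std.Symm r] :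
    ∑ p ∈ (V ×ˢ V).filter (fun p => r p.1 p.2), #(V.filter (r p.2)) =
      ∑ u ∈ V, #(V.filter (r u)) ^ 2 := by
  rw [sum_filter, sum_product_right]
  refine sum_congr rfl fun v _ => ?_
  simp [← sum_filter, Std.Symm.iff _ v, sq]

theorem exists_rel_two_mul_sum_card_filter_le [Std.Symm r]
    (hpos : 0 < ∑ u ∈ V, #(V.filter (r u))) :
    ∃ u ∈ V, ∃ v ∈ V, r u v ∧
      2 * ∑ w ∈ V, #(V.filter (r w)) ≤ #V * (#(V.filter (r u)) + #(V.filter (r v))) := by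
  set S := ∑ w ∈ V, #(V.filter (r w))
  set P := (V ×ˢ V).filter fun p => r p.1 p.2
  have hP : #P = S := card_filter_product_eq_sum_card_filter V
  have hCS : S ^ 2 ≤ #V * ∑ u ∈ V, #(V.filter (r u)) ^ 2 := sq_sum_le_card_mul_sum_sq
  have hsum : ∑ _p ∈ P, 2 * S ≤ ∑ p ∈ P, #V * (#(V.filter (r p.1)) + #(V.filter (r p.2))) := by
    rw [sum_const, hP, ← mul_sum, sum_add_distrib, sum_filter_product_card_filter_fst,
      sum_filter_product_card_filter_snd V, smul_eq_mul]
    nlinarith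
  obtain ⟨p, hp, hle⟩ := exists_le_of_sum_le (card_pos.mp (hP ▸ hpos)) hsum
  obtain ⟨hpV, hrp⟩ := mem_filter.mp hp
  exact ⟨p.1, (mem_product.mp hpV).1, p.2, (mem_product.mp hpV).2, hrp, hle⟩

end SymmetricRelation

section TripleSystem

variable {β : Type*} [DecidableEq β] {V : Finset β} {F : Finset (Finset β)}

lemma Covered.symm {x y : β} (h : Covered F x y) : Covered F y x :=
  let ⟨T, hT, hx, hy⟩ := h
  ⟨T, hT, hy, hx⟩

def Uncovered (F : Finset (Finset β)) (x y : β) : Prop :=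
  x ≠ y ∧ ¬Covered F x y

instance (F : Finset (Finset β)) : DecidableRel (Uncovered F) :=
  fun _ _ => inferInstanceAs (Decidable (_ ∧ _))

instance (F : Finset (Finset β)) : Std.Symm (Uncovered F) :=
  ⟨fun _ _ ⟨hne, hc⟩ => ⟨hne.symm, fun h => hc h.symm⟩⟩

lemma mem_nbhd {W : Finset β} {z : β} :
    z ∈ nbhd V F W ↔
      (z ∈ V ∧ z ∉ W) ∧ ∃ x ∈ W, ∃ y ∈ W, x ≠ y ∧ ({x, y, z} : Finset β) ∈ F := by
  rw [nbhd, mem_filter, mem_sdiff]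

lemma IsLinearTS.eq_of_mem_of_mem (hL : IsLinearTS V F) {T T' : Finset β} (hT : T ∈ F)
    (hT' : T' ∈ F) {x y : β} (hxy : x ≠ y) (hx : x ∈ T) (hy : y ∈ T) (hx' : x ∈ T')
    (hy' : y ∈ T') : T = T' :=
  card_le_one.mp (hL.2 x ((hL.1 T hT).1 hx) y ((hL.1 T hT).1 hy) hxy) T
    (mem_filter.mpr ⟨hT, hx, hy⟩) T' (mem_filter.mpr ⟨hT', hx', hy'⟩)

lemma IsSpreading.nbhd_nonempty (hS : IsSpreading V F) (hV : 5 ≤ #V) {W : Finset β}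
    (hWV : W ⊆ V) (hW3 : 3 ≤ #W) (hW4 : #W ≤ 4) (hWF : W ∉ F) : (nbhd V F W).Nonempty := by
  rw [nonempty_iff_ne_empty]
  intro h
  rw [hS W hWV hW3 hWF W Subset.rfl hWV h] at hW4
  omega

lemma IsSpreading.not_uncovered_triangle (hS : IsSpreading V F) (hV : 5 ≤ #V) {a b c : β}
    (ha : a ∈ V) (hb : b ∈ V) (hc : c ∈ V) (hab : Uncovered F a b) (hac : Uncovered F a c)
    (hbc : Uncovered F b c) : False := by
  have hcard : #({a, b, c} : Finset β) = 3 := card_eq_three.mpr ⟨a, b, c, hab.1, hac.1, hbc.1, rfl⟩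
  have hpairs : ∀ x ∈ ({a, b, c} : Finset β), ∀ y ∈ ({a, b, c} : Finset β), x ≠ y →
      Uncovered F x y := by
    simp only [mem_insert, mem_singleton]
    rintro x (rfl | rfl | rfl) y (rfl | rfl | rfl) hxy <;>
      first
      | exact absurd rfl hxy
      | assumption
      | exact Std.Symm.symm _ _ hab
      | exact Std.Symm.symm _ _ hac
      | exact Std.Symm.symm _ _ hbc
  obtain ⟨z, hz⟩ := hS.nbhd_nonempty hV (W := {a, b, c})
    (by simp [insert_subset_iff, ha, hb, hc]) (by omega) (by omega)
    fun h => hab.2 ⟨_, h, by simp, by simp⟩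
  obtain ⟨-, x, hx, y, hy, hxy, hxyz⟩ := mem_nbhd.mp hz
  exact (hpairs x hx y hy hxy).2 ⟨_, hxyz, by simp, by simp⟩

lemma IsSpreading.not_forall_uncovered (hL : IsLinearTS V F) (hS : IsSpreading V F)
    (hV : 5 ≤ #V) {u : β} (hu : u ∈ V) {T : Finset β} (hT : T ∈ F)
    (huT : ∀ t ∈ T, Uncovered F u t) : False := by
  have huT' : u ∉ T := fun h => (huT u h).1 rfl
  have hcard : #(insert u T) = 4 := by rw [card_insert_of_notMem huT', (hL.1 T hT).2]
  obtain ⟨z, hz⟩ := hS.nbhd_nonempty hV (insert_subset hu (hL.1 T hT).1) (by omega)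
    (by omega) fun h => by simpa [hcard] using (hL.1 _ h).2
  obtain ⟨⟨-, hzW⟩, x, hx, y, hy, hxy, hxyz⟩ := mem_nbhd.mp hz
  have hcov : Covered F x y := ⟨_, hxyz, by simp, by simp⟩
  rw [mem_insert] at hx hy
  rcases hx with rfl | hxT
  · rcases hy with rfl | hyT
    · exact hxy rfl
    · exact (huT y hyT).2 hcov
  rcases hy with rfl | hyT
  · exact (huT x hxT).2 hcov.symm
  have hTeq := hL.eq_of_mem_of_mem hT hxyz hxy hxT hyT (by simp) (by simp)
  exact hzW (mem_insert_of_mem (hTeq ▸ by simp))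

lemma choose_two_card_le_card_filter_card_inter_eq_two {N : Finset β}
    (hcov : ∀ w ∈ N, ∀ w' ∈ N, w ≠ w' → Covered F w w') (hN : ∀ T ∈ F, #(T ∩ N) ≤ 2) :
    (#N).choose 2 ≤ #(F.filter fun T => #(T ∩ N) = 2) := by
  rw [← card_powersetCard]
  refine (card_le_card fun p hp => ?_).trans (card_image_le (f := (· ∩ N)))
  obtain ⟨hpN, hp2⟩ := mem_powersetCard.mp hp
  obtain ⟨w, w', hne, rfl⟩ := card_eq_two.mp hp2
  have hw : w ∈ N := hpN (by simp)
  have hw' : w' ∈ N := hpN (by simp)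
  obtain ⟨T, hT, hwT, hw'T⟩ := hcov w hw w' hw' hne
  have heq : {w, w'} = T ∩ N :=
    eq_of_subset_of_card_le (by simp [insert_subset_iff, *]) (hp2 ▸ hN T hT)
  exact mem_image.mpr ⟨T, mem_filter.mpr ⟨hT, heq ▸ hp2⟩, heq.symm⟩

lemma disjoint_filter_card_inter_eq_two (hF : ∀ T ∈ F, #T ≤ 3) {N₁ N₂ : Finset β}
    (hN : Disjoint N₁ N₂) :
    Disjoint (F.filter fun T => #(T ∩ N₁) = 2) (F.filter fun T => #(T ∩ N₂) = 2) := by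
  refine disjoint_filter.mpr fun T hT h₁ h₂ => ?_
  have hsub : T ∩ N₁ ∪ T ∩ N₂ ⊆ T := union_subset inter_subset_left inter_subset_left
  have hcard := card_le_card hsub
  rw [card_union_of_disjoint (hN.mono inter_subset_right inter_subset_right)] at hcard
  have := hF T hT
  omega

lemma IsSpreading.choose_two_card_le (hL : IsLinearTS V F) (hS : IsSpreading V F)
    (hV : 5 ≤ #V) {u : β} (hu : u ∈ V) :
    (#(V.filter (Uncovered F u))).choose 2 ≤
      #(F.filter fun T => #(T ∩ V.filter (Uncovered F u)) = 2) := by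
  refine choose_two_card_le_card_filter_card_inter_eq_two (fun w hw w' hw' hne => ?_) ?_
  · rw [mem_filter] at hw hw'
    by_contra hnc
    exact hS.not_uncovered_triangle hV hu hw.1 hw'.1 hw.2 hw'.2 ⟨hne, hnc⟩
  · intro T hT
    have hT3 := (hL.1 T hT).2
    by_contra! h
    have hTN : T ∩ V.filter (Uncovered F u) = T :=
      eq_of_subset_of_card_le inter_subset_left (by omega)
    exact hS.not_forall_uncovered hL hV hu hT fun t ht =>
      (mem_filter.mp (inter_subset_right (hTN.symm ▸ ht : t ∈ _))).2

lemma IsSpreading.disjoint_filter_uncovered (hS : IsSpreading V F) (hV : 5 ≤ #V) {u v : β}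
    (hu : u ∈ V) (hv : v ∈ V) (huv : Uncovered F u v) :
    Disjoint (V.filter (Uncovered F u)) (V.filter (Uncovered F v)) :=
  disjoint_left.mpr fun _ hwu hwv =>
    hS.not_uncovered_triangle hV hu hv (mem_filter.mp hwu).1 huv (mem_filter.mp hwu).2
      (mem_filter.mp hwv).2

lemma IsSpreading.choose_two_add_choose_two_le (hL : IsLinearTS V F) (hS : IsSpreading V F)
    (hV : 5 ≤ #V) {u v : β} (hu : u ∈ V) (hv : v ∈ V) (huv : Uncovered F u v) :
    (#(V.filter (Uncovered F u))).choose 2 + (#(V.filter (Uncovered F v))).choose 2 ≤ #F := by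
  have hdisj := disjoint_filter_card_inter_eq_two (fun T hT => (hL.1 T hT).2.le)
    (hS.disjoint_filter_uncovered hV hu hv huv)
  calc _ ≤ _ := add_le_add (hS.choose_two_card_le hL hV hu) (hS.choose_two_card_le hL hV hv)
    _ = _ := (card_union_of_disjoint hdisj).symm
    _ ≤ #F := card_le_card (union_subset (filter_subset _ _) (filter_subset _ _))

lemma IsSpreading.exists_choose_two_add_choose_two_le (hL : IsLinearTS V F)
    (hS : IsSpreading V F) (hV : 5 ≤ #V) (hpos : 0 < ∑ u ∈ V, #(V.filter (Uncovered F u))) :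
    ∃ a b : ℕ, a + b ≤ #V ∧ 2 * ∑ u ∈ V, #(V.filter (Uncovered F u)) ≤ #V * (a + b) ∧
      a.choose 2 + b.choose 2 ≤ #F := by
  obtain ⟨u, hu, v, hv, huv, havg⟩ := exists_rel_two_mul_sum_card_filter_le V hpos
  refine ⟨_, _, ?_, havg, hS.choose_two_add_choose_two_le hL hV hu hv huv⟩
  rw [← card_union_of_disjoint (hS.disjoint_filter_uncovered hV hu hv huv)]
  exact card_le_card (union_subset (filter_subset _ _) (filter_subset _ _))

lemma IsLinearTS.card_mul_card_le (hL : IsLinearTS V F) :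
    #V * #V ≤ #V + 6 * #F + ∑ u ∈ V, #(V.filter (Uncovered F u)) := by
  have hcover : V ×ˢ V ⊆
      V.diag ∪ F.biUnion offDiag ∪ (V ×ˢ V).filter (fun p => Uncovered F p.1 p.2) := by
    rintro ⟨x, y⟩ hxy
    obtain ⟨hx, hy⟩ := mem_product.mp hxy
    by_cases heq : x = y
    · exact mem_union_left _ (mem_union_left _ (mem_diag.mpr ⟨hx, heq⟩))
    by_cases hcov : Covered F x y
    · obtain ⟨T, hT, hxT, hyT⟩ := hcov
      exact mem_union_left _ (mem_union_right _ (mem_biUnion.mpr ⟨T, hT, by simp [*]⟩))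
    · exact mem_union_right _ (mem_filter.mpr ⟨hxy, heq, hcov⟩)
  have hcovered : #(F.biUnion offDiag) ≤ 6 * #F := by
    refine card_biUnion_le.trans (sum_le_card_nsmul _ _ 6 fun T hT => ?_) |>.trans_eq
      (by rw [smul_eq_mul, mul_comm])
    rw [offDiag_card, (hL.1 T hT).2]
  calc #V * #V = #(V ×ˢ V) := (card_product V V).symm
    _ ≤ #V.diag + #(F.biUnion offDiag) + #((V ×ˢ V).filter (fun p => Uncovered F p.1 p.2)) :=
      (card_le_card hcover).trans ((card_union_le _ _).trans
        (add_le_add_left (card_union_le _ _) _))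
    _ ≤ _ := by
      rw [diag_card, card_filter_product_eq_sum_card_filter]
      omega

end TripleSystem

/-- There exists `n₀` such that for every `n ≥ n₀`, every spreading
linear triple system on an `n`-element set has more than `0.1103 n²` triples. -/
theorem statement_2 :
    ∃ n₀ : ℕ, ∀ (β : Type) (_ : DecidableEq β) (V : Finset β) (F : Finset (Finset β)),
      n₀ ≤ V.card → IsLinearTS V F → IsSpreading V F →
      (0.1103 : ℝ) * (V.card : ℝ) ^ 2 < (F.card : ℝ) := by
  refine ⟨1000, fun β _ V F hn hL hS => ?_⟩
  have hV : 5 ≤ #V := by omega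
  have hnR : (1000 : ℝ) ≤ #V := by exact_mod_cast hn
  have hn2 : 1000 * (#V : ℝ) ≤ #V * #V := mul_le_mul_of_nonneg_right hnR (by positivity)
  set S := ∑ u ∈ V, #(V.filter (Uncovered F u))
  -- The threshold `S = 0.335 n²` nearly balances the bounds `(n² - S)/6` and `(S/n)²` of the
  -- two cases.
  by_cases hsparse : 200 * S ≤ 67 * (#V * #V)
  · have hcount := (Nat.cast_le (α := ℝ)).mpr hL.card_mul_card_le
    have hsparseR := (Nat.cast_le (α := ℝ)).mpr hsparse
    simp only [Nat.cast_mul, Nat.cast_add, Nat.cast_ofNat] at hcount hsparseR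
    nlinarith
  obtain ⟨a, b, hab, havg, hedge⟩ := hS.exists_choose_two_add_choose_two_le hL hV (by omega)
  have hdense := (Nat.cast_lt (α := ℝ)).mpr (not_le.mp hsparse)
  replace havg := (Nat.cast_le (α := ℝ)).mpr havg
  replace hab := (Nat.cast_le (α := ℝ)).mpr hab
  replace hedge := (Nat.cast_le (α := ℝ)).mpr hedge
  simp only [Nat.cast_mul, Nat.cast_add, Nat.cast_ofNat, Nat.cast_choose_two]
    at hedge hdense havg hab
  have hlarge : 67 * (#V : ℝ) < 100 * (a + b) := by nlinarith
  have hsq : (67 * (#V : ℝ)) ^ 2 < (100 * (a + b)) ^ 2 := by gcongr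
  nlinarith [sq_nonneg ((a : ℝ) - b)]
end

section
/- Let F be a spreading linear triple system on a finite set V with |V| > 5. Then for any three distinct vertices x, y, z ∈ V, at least one of the pairs {x,y}, {y,z}, {x,z} is covered; that is, the complement of the skeleton of F contains no triangle. -/
/-!
If no two of `x, y, z` lie in a common triple, then no triple of `F` meets `{x, y, z}` in two
points, so `{x, y, z}` has empty neighbourhood: it is its own closure. It is not a triple of `F`,
so spreading forces `{x, y, z} = V`, contradicting `|V| > 5`.
-/

open Finset

variable {α : Type*}

variable [DecidableEq α] {V W : Finset α} {F : Finset (Finset α)}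

theorem covered_comm {x y : α} : Covered F x y ↔ Covered F y x := by
  simp only [Covered, and_comm]

theorem nbhd_eq_empty_of_pairwise_not_covered
    (hW : (W : Set α).Pairwise fun a b => ¬Covered F a b) : nbhd V F W = ∅ := by
  refine eq_empty_iff_forall_notMem.2 fun z hz => ?_
  obtain ⟨-, a, ha, b, hb, hab, hT⟩ := mem_filter.1 hz
  exact hW ha hb hab ⟨_, hT, by simp, by simp⟩

theorem notMem_of_pairwise_not_covered (hW : 1 < W.card)
    (hcov : (W : Set α).Pairwise fun a b => ¬Covered F a b) : W ∉ F := by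
  obtain ⟨a, ha, b, hb, hab⟩ := one_lt_card.1 hW
  exact fun hWF => hcov ha hb hab ⟨W, hWF, ha, hb⟩

theorem IsSpreading.eq_of_pairwise_not_covered (hS : IsSpreading V F) (hWV : W ⊆ V)
    (hW : 3 ≤ W.card) (hcov : (W : Set α).Pairwise fun a b => ¬Covered F a b) : W = V :=
  hS W hWV hW (notMem_of_pairwise_not_covered (by omega) hcov) W subset_rfl hWV
    (nbhd_eq_empty_of_pairwise_not_covered hcov)

theorem statement_7_general {α : Type*} [DecidableEq α] (V : Finset α) (F : Finset (Finset α))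
    (hS : IsSpreading V F) (hV : 5 < V.card)
    (x y z : α) (hx : x ∈ V) (hy : y ∈ V) (hz : z ∈ V)
    (hxy : x ≠ y) (hyz : y ≠ z) (hxz : x ≠ z) :
    Covered F x y ∨ Covered F y z ∨ Covered F x z := by
  by_contra! hc
  obtain ⟨hcxy, hcyz, hcxz⟩ := hc
  have hcov : (({x, y, z} : Finset α) : Set α).Pairwise fun a b => ¬Covered F a b := by
    simp only [coe_insert, coe_singleton, Set.pairwise_insert, Set.pairwise_singleton,
      Set.mem_insert_iff, Set.mem_singleton_iff]
    grind [covered_comm]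
  have hcard : ({x, y, z} : Finset α).card = 3 := card_eq_three.2 ⟨x, y, z, hxy, hxz, hyz, rfl⟩
  have hWV : ({x, y, z} : Finset α) = V :=
    hS.eq_of_pairwise_not_covered (by simp [insert_subset_iff, hx, hy, hz]) hcard.ge hcov
  rw [hWV] at hcard
  omega

/-- In a spreading linear triple system on more than 5 vertices, any
three distinct vertices have at least one covered pair among them: the complement
of the skeleton is triangle-free. -/
theorem statement_7 {α : Type*} [DecidableEq α] (V : Finset α) (F : Finset (Finset α))
    (hL : IsLinearTS V F) (hS : IsSpreading V F) (hV : 5 < V.card)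
    (x y z : α) (hx : x ∈ V) (hy : y ∈ V) (hz : z ∈ V)
    (hxy : x ≠ y) (hyz : y ≠ z) (hxz : x ≠ z) :
    Covered F x y ∨ Covered F y z ∨ Covered F x z :=
  statement_7_general V F hS hV x y z hx hy hz hxy hyz hxz
end

section
/- Let F be a spreading linear triple system on a finite set V with |V| ≥ 4, and let E₀ be any subset of the set of pairs of distinct elements of V that are not covered by a triple of F. Form a new vertex set V* = V ∪ {v_e : e ∈ E₀}, where the v_e are new distinct vertices, and a new triple family F* = F ∪ {{x, y, v_e} : e = {x,y} ∈ E₀}. Then F* is a weakly spreading linear triple system on V*. -/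
open Finset

variable {α : Type*}

/-! The new triples `{x, y, ν e}` meet each other and the old triples in at most one vertex,
because the `ν e` are new and distinct and the pairs `e` are uncovered; so `F*` stays linear.
If `W` is closed in `F*` and contains two triples of `F*`, their traces on `V` show that `W ∩ V`
has at least three vertices and is not a triple of `F`; as `W ∩ V` is closed in `F`, spreading
gives `V ⊆ W`, and closure then forces every `ν e` into `W`. -/

section
variable [DecidableEq α] {V : Finset α} {F : Finset (Finset α)}

def crownTriples (E₀ : Finset (Finset α)) (ν : Finset α → α) : Finset (Finset α) :=
  E₀.image fun e => insert (ν e) e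

theorem isLinearTS_iff :
    IsLinearTS V F ↔ (∀ T ∈ F, T ⊆ V ∧ #T = 3) ∧
      ∀ T₁ ∈ F, ∀ T₂ ∈ F, T₁ ≠ T₂ → #(T₁ ∩ T₂) ≤ 1 := by
  refine and_congr_right fun hF => ⟨fun h T₁ h₁ T₂ h₂ hne => ?_, fun h x _ y _ hxy => ?_⟩
  · by_contra! hlt
    obtain ⟨x, hx, y, hy, hxy⟩ := one_lt_card.1 hlt
    rw [mem_inter] at hx hy
    have hle := h x ((hF T₁ h₁).1 hx.1) y ((hF T₁ h₁).1 hy.1) hxy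
    have hgt : 1 < #(F.filter fun T => x ∈ T ∧ y ∈ T) :=
      one_lt_card.2 ⟨T₁, by simp [h₁, hx.1, hy.1], T₂, by simp [h₂, hx.2, hy.2], hne⟩
    omega
  · refine card_le_one.2 fun T₁ h₁ T₂ h₂ => ?_
    rw [mem_filter] at h₁ h₂
    by_contra hne
    have hle := h T₁ h₁.1 T₂ h₂.1 hne
    have hgt : 1 < #(T₁ ∩ T₂) :=
      one_lt_card.2 ⟨x, mem_inter.2 ⟨h₁.2.1, h₂.2.1⟩, y, mem_inter.2 ⟨h₁.2.2, h₂.2.2⟩, hxy⟩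
    omega

theorem IsLinearTS.mono {V' : Finset α} (h : IsLinearTS V F) (hV : V ⊆ V') :
    IsLinearTS V' F := by
  rw [isLinearTS_iff] at h ⊢
  exact ⟨fun T hT => ⟨(h.1 T hT).1.trans hV, (h.1 T hT).2⟩, h.2⟩

theorem IsLinearTS.union {G : Finset (Finset α)} (hF : IsLinearTS V F) (hG : IsLinearTS V G)
    (hFG : ∀ T ∈ F, ∀ S ∈ G, #(T ∩ S) ≤ 1) : IsLinearTS V (F ∪ G) := by
  rw [isLinearTS_iff] at hF hG ⊢
  refine ⟨fun T hT => (mem_union.1 hT).elim (hF.1 T) (hG.1 T), fun T₁ h₁ T₂ h₂ hne => ?_⟩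
  rcases mem_union.1 h₁ with h₁ | h₁ <;> rcases mem_union.1 h₂ with h₂ | h₂
  · exact hF.2 T₁ h₁ T₂ h₂ hne
  · exact hFG T₁ h₁ T₂ h₂
  · exact inter_comm T₁ T₂ ▸ hFG T₂ h₂ T₁ h₁
  · exact hG.2 T₁ h₁ T₂ h₂ hne

theorem card_inter_le_one_of_card_eq_two {e e' : Finset α} (he : #e = 2) (he' : #e' = 2)
    (hne : e ≠ e') : #(e ∩ e') ≤ 1 := by
  by_contra! h
  have h₁ : e ∩ e' = e := eq_of_subset_of_card_le inter_subset_left (by omega)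
  have h₂ : e ∩ e' = e' := eq_of_subset_of_card_le inter_subset_right (by omega)
  exact hne (h₁.symm.trans h₂)

theorem two_lt_card_union_of_card_eq_two {e e' : Finset α} (he : #e = 2) (he' : #e' = 2)
    (hne : e ≠ e') : 2 < #(e ∪ e') := by
  have := card_union_add_card_inter e e'
  have := card_inter_le_one_of_card_eq_two he he' hne
  omega

theorem card_inter_insert_le_one {T e : Finset α} {v : α} (hv : v ∉ T) (he : #e = 2)
    (heT : ¬e ⊆ T) : #(T ∩ insert v e) ≤ 1 := by
  rw [inter_insert_of_notMem hv]
  by_contra! h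
  have hTe : T ∩ e = e := eq_of_subset_of_card_le inter_subset_right (by omega)
  exact heT (hTe ▸ inter_subset_left)

theorem card_insert_inter_insert_le_one {e e' : Finset α} {a b : α} (hab : a ≠ b) (ha : a ∉ e')
    (hb : b ∉ e) (he : #e = 2) (he' : #e' = 2) (hne : e ≠ e') :
    #(insert a e ∩ insert b e') ≤ 1 := by
  rw [insert_inter_of_notMem (by simp [hab, ha]), inter_insert_of_notMem hb]
  exact card_inter_le_one_of_card_eq_two he he' hne

variable {E₀ : Finset (Finset α)} {ν : Finset α → α}

theorem isLinearTS_crownTriples (hE : ∀ e ∈ E₀, e ⊆ V ∧ #e = 2) (hν : ∀ e ∈ E₀, ν e ∉ V)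
    (hinj : Set.InjOn ν ↑E₀) : IsLinearTS (V ∪ E₀.image ν) (crownTriples E₀ ν) := by
  rw [isLinearTS_iff]
  simp only [crownTriples, forall_mem_image]
  constructor
  · intro e he
    refine ⟨insert_subset (mem_union_right _ (mem_image_of_mem ν he))
      ((hE e he).1.trans subset_union_left), ?_⟩
    rw [card_insert_of_notMem fun h => hν e he ((hE e he).1 h), (hE e he).2]
  · intro e he e' he' hne
    have hee' : e ≠ e' := by rintro rfl; exact hne rfl
    exact card_insert_inter_insert_le_one (fun h => hee' (hinj he he' h))
      (fun h => hν e he ((hE e' he').1 h)) (fun h => hν e' he' ((hE e he).1 h))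
      (hE e he).2 (hE e' he').2 hee'

theorem IsLinearTS.union_crownTriples (hL : IsLinearTS V F)
    (hE : ∀ e ∈ E₀, e ⊆ V ∧ #e = 2 ∧ ¬∃ T ∈ F, e ⊆ T) (hν : ∀ e ∈ E₀, ν e ∉ V)
    (hinj : Set.InjOn ν ↑E₀) : IsLinearTS (V ∪ E₀.image ν) (F ∪ crownTriples E₀ ν) := by
  refine (hL.mono subset_union_left).union
    (isLinearTS_crownTriples (fun e he => ⟨(hE e he).1, (hE e he).2.1⟩) hν hinj) fun T hT => ?_
  simp only [crownTriples, forall_mem_image]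
  exact fun e he => card_inter_insert_le_one (fun h => hν e he ((hL.1 T hT).1 h)) (hE e he).2.1
    fun h => (hE e he).2.2 ⟨T, hT, h⟩

theorem nbhd_inter_subset {V' : Finset α} {F' : Finset (Finset α)} (hV : V ⊆ V') (hF : F ⊆ F')
    (W : Finset α) : nbhd V F (W ∩ V) ⊆ nbhd V' F' W := by
  intro z
  simp only [nbhd, mem_filter, mem_sdiff, mem_inter]
  rintro ⟨⟨hzV, hzW⟩, x, ⟨hxW, -⟩, y, ⟨hyW, -⟩, hxy, hT⟩
  exact ⟨⟨hV hzV, fun h => hzW ⟨h, hzV⟩⟩, x, hxW, y, hyW, hxy, hF hT⟩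

theorem mem_of_nbhd_eq_empty {W : Finset α} {x y z : α} (h : nbhd V F W = ∅)
    (hT : ({x, y, z} : Finset α) ∈ F) (hx : x ∈ W) (hy : y ∈ W) (hxy : x ≠ y) (hz : z ∈ V) :
    z ∈ W := by
  by_contra hzW
  have hmem : z ∈ nbhd V F W := mem_filter.2 ⟨mem_sdiff.2 ⟨hz, hzW⟩, x, hx, y, hy, hxy, hT⟩
  simp [h] at hmem

theorem three_le_card_inter_of_crownTriples (hF : ∀ T ∈ F, T ⊆ V ∧ #T = 3)
    (hE : ∀ e ∈ E₀, e ⊆ V ∧ #e = 2) {A B W : Finset α} (hA : A ∈ F ∪ crownTriples E₀ ν)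
    (hB : B ∈ F ∪ crownTriples E₀ ν) (hAB : A ≠ B) (hAW : A ⊆ W) (hBW : B ⊆ W) :
    3 ≤ #(W ∩ V) := by
  have of_old : ∀ T ∈ F, T ⊆ W → 3 ≤ #(W ∩ V) := fun T hT hTW =>
    (hF T hT).2 ▸ card_le_card (subset_inter hTW (hF T hT).1)
  simp only [crownTriples, mem_union, mem_image] at hA hB
  obtain hA | ⟨e, he, rfl⟩ := hA
  · exact of_old A hA hAW
  obtain hB | ⟨e', he', rfl⟩ := hB
  · exact of_old B hB hBW
  have hne : e ≠ e' := by rintro rfl; exact hAB rfl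
  calc 3 ≤ #(e ∪ e') := two_lt_card_union_of_card_eq_two (hE e he).2 (hE e' he').2 hne
    _ ≤ #(W ∩ V) := card_le_card (union_subset
        (subset_inter ((subset_insert _ _).trans hAW) (hE e he).1)
        (subset_inter ((subset_insert _ _).trans hBW) (hE e' he').1))

theorem inter_notMem_of_crownTriples (hF : ∀ T ∈ F, T ⊆ V ∧ #T = 3)
    (hE : ∀ e ∈ E₀, e ⊆ V ∧ ¬∃ T ∈ F, e ⊆ T) {A B W : Finset α}
    (hA : A ∈ F ∪ crownTriples E₀ ν) (hB : B ∈ F ∪ crownTriples E₀ ν) (hAB : A ≠ B)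
    (hAW : A ⊆ W) (hBW : B ⊆ W) : W ∩ V ∉ F := by
  intro hS
  have eq_of_subset : ∀ T ∈ F ∪ crownTriples E₀ ν, T ⊆ W → T = W ∩ V := by
    simp only [crownTriples, mem_union, mem_image]
    rintro T (hT | ⟨e, he, rfl⟩) hTW
    · exact eq_of_subset_of_card_le (subset_inter hTW (hF T hT).1)
        (by rw [(hF _ hS).2, (hF T hT).2])
    · exact ((hE e he).2 ⟨W ∩ V, hS,
        subset_inter ((subset_insert _ _).trans hTW) (hE e he).1⟩).elim
  exact hAB ((eq_of_subset A hA hAW).trans (eq_of_subset B hB hBW).symm)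

theorem IsSpreading.isWeaklySpreading_union_crownTriples (hS : IsSpreading V F)
    (hF : ∀ T ∈ F, T ⊆ V ∧ #T = 3) (hE : ∀ e ∈ E₀, e ⊆ V ∧ #e = 2 ∧ ¬∃ T ∈ F, e ⊆ T) :
    IsWeaklySpreading (V ∪ E₀.image ν) (F ∪ crownTriples E₀ ν) := by
  intro F' hF' hcard W hW hWV hnb
  obtain ⟨A, hA, B, hB, hAB⟩ := one_lt_card.1 hcard
  have hAW : A ⊆ W := (subset_biUnion_of_mem id hA).trans hW
  have hBW : B ⊆ W := (subset_biUnion_of_mem id hB).trans hW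
  have hVW : V ⊆ W := by
    have hclosed : nbhd V F (W ∩ V) = ∅ :=
      subset_empty.1 (hnb ▸ nbhd_inter_subset subset_union_left subset_union_left W)
    have hWV' : W ∩ V = V := hS (W ∩ V) inter_subset_right
      (three_le_card_inter_of_crownTriples hF (fun e he => ⟨(hE e he).1, (hE e he).2.1⟩)
        (hF' hA) (hF' hB) hAB hAW hBW)
      (inter_notMem_of_crownTriples hF (fun e he => ⟨(hE e he).1, (hE e he).2.2⟩)
        (hF' hA) (hF' hB) hAB hAW hBW)
      (W ∩ V) subset_rfl inter_subset_right hclosed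
    exact hWV' ▸ inter_subset_left
  refine hWV.antisymm (union_subset hVW ?_)
  intro z hz
  obtain ⟨e, he, rfl⟩ := mem_image.1 hz
  obtain ⟨x, y, hxy, rfl⟩ := card_eq_two.1 (hE e he).2.1
  have hT : ({x, y, ν {x, y}} : Finset α) ∈ F ∪ crownTriples E₀ ν := by
    refine mem_union_right _ (mem_image.2 ⟨{x, y}, he, ?_⟩)
    ext; simp only [mem_insert, mem_singleton]; tauto
  exact mem_of_nbhd_eq_empty hnb hT (hVW ((hE _ he).1 (by simp))) (hVW ((hE _ he).1 (by simp)))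
    hxy (mem_union_right _ hz)

end

theorem statement_17_general {α : Type*} [DecidableEq α] (V : Finset α) (F : Finset (Finset α))
    (hL : IsLinearTS V F) (hS : IsSpreading V F)
    (E₀ : Finset (Finset α))
    (hE : ∀ e ∈ E₀, e ⊆ V ∧ e.card = 2 ∧ ¬∃ T ∈ F, e ⊆ T)
    (ν : Finset α → α)
    (hν : ∀ e ∈ E₀, ν e ∉ V)
    (hinj : Set.InjOn ν ↑E₀) :
    IsLinearTS (V ∪ E₀.image ν) (F ∪ E₀.image fun e => insert (ν e) e) ∧
    IsWeaklySpreading (V ∪ E₀.image ν) (F ∪ E₀.image fun e => insert (ν e) e) :=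
  ⟨hL.union_crownTriples hE hν hinj, hS.isWeaklySpreading_union_crownTriples hL.1 hE⟩

/-- Crowning construction: adding a fresh vertex `ν e` on any subset
`E₀` of the uncovered pairs of a spreading linear triple system yields a weakly
spreading linear triple system. -/
theorem statement_17 {α : Type*} [DecidableEq α] (V : Finset α) (F : Finset (Finset α))
    (hL : IsLinearTS V F) (hS : IsSpreading V F) (hV : 4 ≤ V.card)
    (E₀ : Finset (Finset α))
    (hE : ∀ e ∈ E₀, e ⊆ V ∧ e.card = 2 ∧ ¬∃ T ∈ F, e ⊆ T)
    (ν : Finset α → α)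
    (hν : ∀ e ∈ E₀, ν e ∉ V)
    (hinj : Set.InjOn ν ↑E₀) :
    IsLinearTS (V ∪ E₀.image ν) (F ∪ E₀.image fun e => insert (ν e) e) ∧
    IsWeaklySpreading (V ∪ E₀.image ν) (F ∪ E₀.image fun e => insert (ν e) e) :=
  statement_17_general V F hL hS E₀ hE ν hν hinj
end

section
/- Let m ≥ 2 and let L : {0,…,m−1} × {0,…,m−1} → {0,…,m−1} be a Latin square of order m, i.e., for every i the map j ↦ L(i,j) is a bijection and for every j the map i ↦ L(i,j) is a bijection. Suppose L has no proper subsquare: there are no sets R, C, S ⊆ {0,…,m−1} with 2 ≤ |R| = |C| = |S| < m such that L(i,j) ∈ S for all i ∈ R and j ∈ C. Let V be the disjoint union of three copies U = {u₀,…,u_{m−1}}, W = {w₀,…,w_{m−1}}, X = {x₀,…,x_{m−1}} of {0,…,m−1}, and let T = { {u_i, w_j, x_{L(i,j)}} : 0 ≤ i, j ≤ m−1 }. Then T is a weakly spreading linear triple system on the 3m-element set V with m² triples. -/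
open Finset

variable {α : Type*}

/-!
If a set `W` of vertices with empty neighbourhood contains two triples, let `R`, `C`, `S` be the
rows, columns and symbols whose vertices lie in `W`. Any two coordinates of a cell lying in these
sets force the third, since `W` is closed. Fixing a row `i ∈ R`, the bijection `j ↦ L i j` then
maps `C` onto `S`, and fixing a column maps `R` onto `S`, so `|R| = |C| = |S|`; the two triples
give `|R| |C| ≥ 2`. Hence `R × C → S` is a subsquare of order at least two, which must be the whole
square, and `W` is everything.
-/

theorem subset_of_nbhd_eq_empty [DecidableEq α] {V W t : Finset α} {F : Finset (Finset α)}
    (hW : nbhd V F W = ∅) (ht : t ∈ F) (htV : t ⊆ V) (ht3 : t.card = 3) {x y : α}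
    (hxy : x ≠ y) (hxt : x ∈ t) (hyt : y ∈ t) (hxW : x ∈ W) (hyW : y ∈ W) : t ⊆ W := by
  intro z hzt
  by_contra hzW
  have hzx : x ≠ z := by rintro rfl; exact hzW hxW
  have hzy : y ≠ z := by rintro rfl; exact hzW hyW
  have hxyz : {x, y, z} = t :=
    eq_of_subset_of_card_le (by simp [insert_subset_iff, hxt, hyt, hzt])
      (ht3.trans_le (card_eq_three.2 ⟨x, y, z, hxy, hzx, hzy, rfl⟩).ge)
  have hz : z ∈ nbhd V F W :=
    mem_filter.2 ⟨mem_sdiff.2 ⟨htV hzt, hzW⟩, x, hxW, y, hyW, hxy, hxyz ▸ ht⟩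
  simp [hW] at hz

section LatinSquare

variable {m : ℕ} (L : Fin m → Fin m → Fin m)

structure IsLatinClosed (R C S : Finset (Fin m)) : Prop where
  mem_sym : ∀ i ∈ R, ∀ j ∈ C, L i j ∈ S
  mem_col : ∀ i ∈ R, ∀ j, L i j ∈ S → j ∈ C
  mem_row : ∀ j ∈ C, ∀ i, L i j ∈ S → i ∈ R

variable {L}

theorem IsLatinClosed.card_col {R C S : Finset (Fin m)} (h : IsLatinClosed L R C S)
    (hrow : ∀ i, Function.Bijective (L i)) {i : Fin m} (hi : i ∈ R) : C.card = S.card :=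
  card_bijective (L i) (hrow i) fun j => ⟨h.mem_sym i hi j, h.mem_col i hi j⟩

theorem IsLatinClosed.card_row {R C S : Finset (Fin m)} (h : IsLatinClosed L R C S)
    (hcol : ∀ j, Function.Bijective fun i => L i j) {j : Fin m} (hj : j ∈ C) :
    R.card = S.card :=
  card_bijective (fun i => L i j) (hcol j) fun i => ⟨(h.mem_sym i · j hj), h.mem_row j hj i⟩

theorem IsLatinClosed.eq_univ {R C S : Finset (Fin m)} (h : IsLatinClosed L R C S)
    (hrow : ∀ i, Function.Bijective (L i)) (hcol : ∀ j, Function.Bijective fun i => L i j)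
    (hsub : ¬∃ R C S : Finset (Fin m), 2 ≤ R.card ∧ R.card = C.card ∧ C.card = S.card ∧
        S.card < m ∧ ∀ i ∈ R, ∀ j ∈ C, L i j ∈ S)
    (hRC : 1 < (R ×ˢ C).card) : R = univ ∧ C = univ ∧ S = univ := by
  obtain ⟨⟨i, j⟩, hij, -⟩ := one_lt_card.1 hRC
  obtain ⟨hi, hj⟩ := mem_product.1 hij
  have hRS := h.card_row hcol hj
  have hCS := h.card_col hrow hi
  have hS2 : 2 ≤ S.card := by
    rw [card_product, hRS, hCS] at hRC
    nlinarith
  have hSm : S.card = m := by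
    by_contra hSm
    have hSle : S.card ≤ m := by simpa using card_le_univ S
    exact hsub ⟨R, C, S, hRS ▸ hS2, hRS.trans hCS.symm, hCS, by omega, h.mem_sym⟩
  refine ⟨?_, ?_, ?_⟩ <;> apply eq_univ_of_card <;> simp [hRS, hCS, hSm]

variable (L) in
/-- `Sum.inl i`, `Sum.inr (Sum.inl j)`, `Sum.inr (Sum.inr k)` encode `u_i`, `w_j`, `x_k`. -/
def latinTriple (p : Fin m × Fin m) : Finset (Fin m ⊕ Fin m ⊕ Fin m) :=
  {Sum.inl p.1, Sum.inr (Sum.inl p.2), Sum.inr (Sum.inr (L p.1 p.2))}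

variable (L) in
def latinTriples : Finset (Finset (Fin m ⊕ Fin m ⊕ Fin m)) :=
  univ.image (latinTriple L)

@[simp]
theorem mem_latinTriple {x : Fin m ⊕ Fin m ⊕ Fin m} {p : Fin m × Fin m} :
    x ∈ latinTriple L p ↔
      x = Sum.inl p.1 ∨ x = Sum.inr (Sum.inl p.2) ∨ x = Sum.inr (Sum.inr (L p.1 p.2)) := by
  simp [latinTriple]

theorem card_latinTriple (p : Fin m × Fin m) : (latinTriple L p).card = 3 := by
  rw [latinTriple, card_insert_of_notMem (by simp), card_pair (by simp)]

theorem eq_of_mem_latinTriple (hrow : ∀ i, Function.Bijective (L i))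
    (hcol : ∀ j, Function.Bijective fun i => L i j) {p q : Fin m × Fin m}
    {x y : Fin m ⊕ Fin m ⊕ Fin m} (hxy : x ≠ y) (hxp : x ∈ latinTriple L p)
    (hyp : y ∈ latinTriple L p) (hxq : x ∈ latinTriple L q) (hyq : y ∈ latinTriple L q) :
    p = q := by
  obtain ⟨i, j⟩ := p
  obtain ⟨i', j'⟩ := q
  have hr : ∀ i j j', L i j = L i j' → j = j' := fun i _ _ h => (hrow i).injective h
  have hc : ∀ j i i', L i j = L i' j → i = i' := fun j _ _ h => (hcol j).injective h
  clear hrow hcol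
  simp only [mem_latinTriple] at hxp hyp hxq hyq
  rcases hxp with rfl | rfl | rfl <;> rcases hyp with rfl | rfl | rfl <;> grind

theorem latinTriple_injective (hrow : ∀ i, Function.Bijective (L i))
    (hcol : ∀ j, Function.Bijective fun i => L i j) : Function.Injective (latinTriple L) :=
  fun p q h => eq_of_mem_latinTriple hrow hcol (x := Sum.inl p.1) (y := Sum.inr (Sum.inl p.2))
    (by simp) (by simp) (by simp) (h ▸ by simp) (h ▸ by simp)

theorem card_latinTriples (hrow : ∀ i, Function.Bijective (L i))
    (hcol : ∀ j, Function.Bijective fun i => L i j) : (latinTriples L).card = m ^ 2 := by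
  rw [latinTriples, card_image_of_injective _ (latinTriple_injective hrow hcol)]
  simp [sq]

theorem isLinearTS_latinTriples (hrow : ∀ i, Function.Bijective (L i))
    (hcol : ∀ j, Function.Bijective fun i => L i j) : IsLinearTS univ (latinTriples L) := by
  refine ⟨?_, fun x _ y _ hxy => card_le_one.2 fun t ht t' ht' => ?_⟩
  · simp only [latinTriples, mem_image]
    rintro _ ⟨p, -, rfl⟩
    exact ⟨subset_univ _, card_latinTriple p⟩
  · simp only [latinTriples, mem_filter, mem_image] at ht ht'
    obtain ⟨⟨p, -, rfl⟩, hxp, hyp⟩ := ht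
    obtain ⟨⟨q, -, rfl⟩, hxq, hyq⟩ := ht'
    rw [eq_of_mem_latinTriple hrow hcol hxy hxp hyp hxq hyq]

theorem latinTriple_subset_of_nbhd_eq_empty {W : Finset (Fin m ⊕ Fin m ⊕ Fin m)}
    (hW : nbhd univ (latinTriples L) W = ∅) (p : Fin m × Fin m)
    {x y : Fin m ⊕ Fin m ⊕ Fin m} (hxy : x ≠ y) (hxp : x ∈ latinTriple L p)
    (hyp : y ∈ latinTriple L p) (hxW : x ∈ W) (hyW : y ∈ W) : latinTriple L p ⊆ W :=
  subset_of_nbhd_eq_empty hW (mem_image_of_mem _ (mem_univ p)) (subset_univ _)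
    (card_latinTriple p) hxy hxp hyp hxW hyW

theorem isLatinClosed_of_nbhd_eq_empty {W : Finset (Fin m ⊕ Fin m ⊕ Fin m)}
    (hW : nbhd univ (latinTriples L) W = ∅) :
    IsLatinClosed L {i | Sum.inl i ∈ W} {j | Sum.inr (Sum.inl j) ∈ W}
      {k | Sum.inr (Sum.inr k) ∈ W} := by
  refine ⟨fun i hi j hj => ?_, fun i hi j hk => ?_, fun j hj i hk => ?_⟩
  · simp only [mem_filter, mem_univ, true_and] at hi hj ⊢
    exact latinTriple_subset_of_nbhd_eq_empty hW (i, j) (by simp) (by simp) (by simp) hi hj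
      (by simp)
  · simp only [mem_filter, mem_univ, true_and] at hi hk ⊢
    exact latinTriple_subset_of_nbhd_eq_empty hW (i, j) (by simp) (by simp) (by simp) hi hk
      (by simp)
  · simp only [mem_filter, mem_univ, true_and] at hj hk ⊢
    exact latinTriple_subset_of_nbhd_eq_empty hW (i, j) (by simp) (by simp) (by simp) hj hk
      (by simp)

theorem isWeaklySpreading_latinTriples (hrow : ∀ i, Function.Bijective (L i))
    (hcol : ∀ j, Function.Bijective fun i => L i j)
    (hsub : ¬∃ R C S : Finset (Fin m), 2 ≤ R.card ∧ R.card = C.card ∧ C.card = S.card ∧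
        S.card < m ∧ ∀ i ∈ R, ∀ j ∈ C, L i j ∈ S) :
    IsWeaklySpreading univ (latinTriples L) := by
  intro F' hF' hF'2 W hF'W _ hW
  have hcells : 1 < (({i | Sum.inl i ∈ W} : Finset (Fin m)) ×ˢ
      ({j | Sum.inr (Sum.inl j) ∈ W} : Finset (Fin m))).card := by
    obtain ⟨_, ht, _, ht', hne⟩ := one_lt_card.1 hF'2
    obtain ⟨p, -, rfl⟩ := mem_image.1 (hF' ht)
    obtain ⟨q, -, rfl⟩ := mem_image.1 (hF' ht')
    have hpW : latinTriple L p ⊆ W := (subset_biUnion_of_mem id ht).trans hF'W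
    have hqW : latinTriple L q ⊆ W := (subset_biUnion_of_mem id ht').trans hF'W
    refine one_lt_card.2 ⟨p, ?_, q, ?_, fun h => hne (h ▸ rfl)⟩ <;>
      simp only [mem_product, mem_filter, mem_univ, true_and]
    · exact ⟨hpW (by simp), hpW (by simp)⟩
    · exact ⟨hqW (by simp), hqW (by simp)⟩
  obtain ⟨hR, hC, hS⟩ := (isLatinClosed_of_nbhd_eq_empty hW).eq_univ hrow hcol hsub hcells
  refine eq_univ_of_forall fun v => ?_
  rcases v with i | j | k
  · simpa using eq_univ_iff_forall.1 hR i
  · simpa using eq_univ_iff_forall.1 hC j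
  · simpa using eq_univ_iff_forall.1 hS k

end LatinSquare

theorem statement_18_general (m : ℕ) (L : Fin m → Fin m → Fin m)
    (hrow : ∀ i, Function.Bijective (L i))
    (hcol : ∀ j, Function.Bijective fun i => L i j)
    (hsub : ¬∃ R C S : Finset (Fin m), 2 ≤ R.card ∧ R.card = C.card ∧ C.card = S.card ∧
        S.card < m ∧ ∀ i ∈ R, ∀ j ∈ C, L i j ∈ S)
    (V : Finset (Fin m ⊕ Fin m ⊕ Fin m)) (hV : V = Finset.univ)
    (T : Finset (Finset (Fin m ⊕ Fin m ⊕ Fin m)))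
    (hT : T = Finset.image (fun p : Fin m × Fin m =>
      ({Sum.inl p.1, Sum.inr (Sum.inl p.2), Sum.inr (Sum.inr (L p.1 p.2))} :
        Finset (Fin m ⊕ Fin m ⊕ Fin m))) Finset.univ) :
    V.card = 3 * m ∧ T.card = m ^ 2 ∧ IsLinearTS V T ∧ IsWeaklySpreading V T := by
  subst hV
  change T = latinTriples L at hT
  subst hT
  refine ⟨?_, card_latinTriples hrow hcol, isLinearTS_latinTriples hrow hcol,
    isWeaklySpreading_latinTriples hrow hcol hsub⟩
  simp only [card_univ, Fintype.card_sum, Fintype.card_fin]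
  ring

/-- The triple system obtained from a subsquare-free Latin square of
order `m ≥ 2` on the disjoint union of three copies of `{0,…,m-1}` is a weakly
spreading linear triple system on `3m` vertices with `m²` triples. -/
theorem statement_18 (m : ℕ) (hm : 2 ≤ m) (L : Fin m → Fin m → Fin m)
    (hrow : ∀ i, Function.Bijective (L i))
    (hcol : ∀ j, Function.Bijective fun i => L i j)
    (hsub : ¬∃ R C S : Finset (Fin m), 2 ≤ R.card ∧ R.card = C.card ∧ C.card = S.card ∧
        S.card < m ∧ ∀ i ∈ R, ∀ j ∈ C, L i j ∈ S)
    (V : Finset (Fin m ⊕ Fin m ⊕ Fin m)) (hV : V = Finset.univ)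
    (T : Finset (Finset (Fin m ⊕ Fin m ⊕ Fin m)))
    (hT : T = Finset.image (fun p : Fin m × Fin m =>
      ({Sum.inl p.1, Sum.inr (Sum.inl p.2), Sum.inr (Sum.inr (L p.1 p.2))} :
        Finset (Fin m ⊕ Fin m ⊕ Fin m))) Finset.univ) :
    V.card = 3 * m ∧ T.card = m ^ 2 ∧ IsLinearTS V T ∧ IsWeaklySpreading V T :=
  statement_18_general m L hrow hcol hsub V hV T hT
end
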